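/- Let R be the free noncommutative F-algebra on two generators X₁, X₂ over F = ℚ(A), with the endomorphisms T₁, T₁⁻, T₂, T₂⁻ and the two-sided ideal J as above. Then for k ∈ {1,2}, the element T₁T₂T₁(X_k) − T₂T₁T₂(X_k) belongs to J; that is, the braid relation T₁T₂T₁(X_k) = T₂T₁T₂(X_k) holds in the quotient algebra B = R/J. -/

import Mathlib

/-- `F = ℚ(A)`, the field of rational functions in one variable over `ℚ`. -/
noncomputable abbrev F : Type := RatFunc ℚ

/-- The variable `A ∈ ℚ(A)`. -/
noncomputable def A : F := RatFunc.X

/-- The deformed bracket `[x,y]_A = A·(x*y) − A⁻¹·(y*x)` in an `F`-algebra. -/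
noncomputable def brA {S : Type*} [Ring S] [Algebra F S] (x y : S) : S :=
  A • (x * y) - A⁻¹ • (y * x)

/-- `R`, the free noncommutative `F`-algebra on two generators. -/
noncomputable abbrev R : Type := FreeAlgebra F (Fin 2)

/-- The first generator `X₁`. -/
noncomputable def X1 : R := FreeAlgebra.ι F 0

/-- The second generator `X₂`. -/
noncomputable def X2 : R := FreeAlgebra.ι F 1

/-- The generators as a function on `Fin 2`. -/
noncomputable def X : Fin 2 → R := ![X1, X2]

/-- `T₁ : X₁ ↦ X₁, X₂ ↦ [X₁,X₂]_A`. -/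
noncomputable def T1 : R →ₐ[F] R := FreeAlgebra.lift F ![X1, brA X1 X2]

/-- `T₁⁻ : X₁ ↦ X₁, X₂ ↦ [X₂,X₁]_A`. -/
noncomputable def T1inv : R →ₐ[F] R := FreeAlgebra.lift F ![X1, brA X2 X1]

/-- `T₂ : X₁ ↦ [X₂,X₁]_A, X₂ ↦ X₂`. -/
noncomputable def T2 : R →ₐ[F] R := FreeAlgebra.lift F ![brA X2 X1, X2]

/-- `T₂⁻ : X₁ ↦ [X₁,X₂]_A, X₂ ↦ X₂`. -/
noncomputable def T2inv : R →ₐ[F] R := FreeAlgebra.lift F ![brA X1 X2, X2]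

/-- The two-sided ideal `J` generated by `[[X₁,X₂]_A, X₁]_A − X₂` and
`[[X₂,X₁]_A, X₂]_A − X₁`. -/
noncomputable def J : TwoSidedIdeal R :=
  TwoSidedIdeal.span {brA (brA X1 X2) X1 - X2, brA (brA X2 X1) X2 - X1}

/-!
`T₁` and `T₂` are algebra maps, so they commute with `[·,·]_A`, and both sides of the braid
relation become nested brackets of `X₁, X₂`. For `k = 1`, writing `[[X₂,X₁]_A, X₂]_A = g + X₁`
with `g ∈ J`, the difference is `-[g, [X₂,X₁]_A]_A` by the flexible law
`[[x,y]_A, x]_A = [x, [y,x]_A]_A`; the case `k = 2` is the same with the generators swapped.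
-/

section Bracket

variable {S : Type*} [Ring S] [Algebra F S]

lemma brA_sub_left (x y z : S) : brA (x - y) z = brA x z - brA y z := by
  simp only [brA, sub_mul, mul_sub, smul_sub]
  abel

lemma brA_flexible (x y : S) : brA (brA x y) x = brA x (brA y x) := by
  simp only [brA, smul_sub, sub_mul, mul_sub, smul_mul_assoc, mul_smul_comm, smul_smul,
    mul_assoc, mul_comm A⁻¹ A]
  abel

@[simp]
lemma map_brA {S' : Type*} [Ring S'] [Algebra F S'] (f : S →ₐ[F] S') (x y : S) :
    f (brA x y) = brA (f x) (f y) := by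
  simp only [brA, map_sub, map_smul, map_mul]

lemma brA_mem_of_mem_left (I : TwoSidedIdeal S) {x : S} (hx : x ∈ I) (y : S) :
    brA x y ∈ I := by
  simp only [brA, Algebra.smul_def]
  exact I.sub_mem (I.mul_mem_left _ _ (I.mul_mem_right _ _ hx))
    (I.mul_mem_left _ _ (I.mul_mem_left _ _ hx))

lemma brA_braid_sub_mem (I : TwoSidedIdeal S) {x y : S} (h : brA (brA y x) y - x ∈ I) :
    brA (brA x y) x - brA (brA (brA y x) y) (brA y x) ∈ I := by
  have collapse : brA (brA x y) x - brA (brA (brA y x) y) (brA y x) =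
      -brA (brA (brA y x) y - x) (brA y x) := by
    rw [brA_sub_left, brA_flexible]
    abel
  rw [collapse]
  exact I.neg_mem (brA_mem_of_mem_left I h _)

end Bracket

@[simp] lemma T1_X1 : T1 X1 = X1 := by simp [T1, X1]

@[simp] lemma T1_X2 : T1 X2 = brA X1 X2 := by simp [T1, X2]

@[simp] lemma T2_X1 : T2 X1 = brA X2 X1 := by simp [T2, X1]

@[simp] lemma T2_X2 : T2 X2 = X2 := by simp [T2, X2]

lemma brA_brA_X1_X2_X1_sub_mem_J : brA (brA X1 X2) X1 - X2 ∈ J :=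
  TwoSidedIdeal.subset_span (Set.mem_insert _ _)

lemma brA_brA_X2_X1_X2_sub_mem_J : brA (brA X2 X1) X2 - X1 ∈ J :=
  TwoSidedIdeal.subset_span (Set.mem_insert_of_mem _ rfl)

/-- The braid relation `T₁T₂T₁(X_k) = T₂T₁T₂(X_k)` holds in the quotient `B = R/J`. -/
theorem braid_relation_mem (k : Fin 2) :
    T1 (T2 (T1 (X k))) - T2 (T1 (T2 (X k))) ∈ J := by
  fin_cases k
  · simpa [X] using brA_braid_sub_mem J brA_brA_X2_X1_X2_sub_mem_J
  · simpa [X] using J.neg_mem (brA_braid_sub_mem J brA_brA_X1_X2_X1_sub_mem_J)
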